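/- Let U be the lattice points of the polytope with vertices (0,0),(a,0),(b,q−2),(0,q−2), 0 ≤ b ≤ a ≤ q−2, 2a ≤ q−2. Then the reduction mod q−1 of the Minkowski sum U+U is exactly the set of lattice points of the convex polytope with vertices (0,0),(2a,0),(a+b,q−2),(0,q−2). -/

import Mathlib

/-!
The trapezoid with vertices `(0,0), (a,0), (b,s), (0,s)` is cut out by `0 ≤ y ≤ s` and
`s x + (a - b) y ≤ a s`, so its lattice points are described by linear inequalities over `ℕ`.
With `s = q - 2`, first coordinates of sums are at most `2a ≤ s < q - 1` and never wrap, while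
reducing a second coordinate only lowers it into `[0, s]`; since `b ≤ a`, lowering `y` keeps a
point of the doubled trapezoid inside it. Conversely every lattice point `(x, y)` of the doubled
trapezoid is `(min x a, 0) + (x - min x a, y)` with both summands in the original one.
-/

/-- The lattice points of the polytope with vertices `(0,0),(a,0),(b,s),(0,s)`. -/
def latticePts (a b s : ℕ) : Set (ℕ × ℕ) :=
  {u : ℕ × ℕ | ((u.1 : ℝ), (u.2 : ℝ)) ∈
    convexHull ℝ {((0 : ℝ), (0 : ℝ)), ((a : ℝ), 0), ((b : ℝ), (s : ℝ)), (0, (s : ℝ))}}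

theorem convexHull_trapezoid_subset {a b s : ℝ} (ha : 0 ≤ a) (hb : 0 ≤ b) (hs : 0 < s) :
    convexHull ℝ {((0 : ℝ), (0 : ℝ)), (a, 0), (b, s), (0, s)} ⊆
      {p : ℝ × ℝ | p.2 ≤ s} ∩ {p | s * p.1 + (a - b) * p.2 ≤ a * s} := by
  refine convexHull_min ?_ ((convex_halfSpace_le ?_ _).inter (convex_halfSpace_le ?_ _))
  · simp only [Set.insert_subset_iff, Set.singleton_subset_iff, Set.mem_inter_iff,
      Set.mem_ofPred_eq]
    refine ⟨⟨?_, ?_⟩, ⟨?_, ?_⟩, ⟨?_, ?_⟩, ⟨?_, ?_⟩⟩ <;> nlinarith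
  · exact (LinearMap.snd ℝ ℝ ℝ).isLinear
  · exact (s • LinearMap.fst ℝ ℝ ℝ + (a - b) • LinearMap.snd ℝ ℝ ℝ).isLinear

theorem mem_convexHull_trapezoid {a b s x y : ℝ} (hs : 0 < s)
    (hx : 0 ≤ x) (hy : 0 ≤ y) (hys : y ≤ s) (h : s * x + (a - b) * y ≤ a * s) :
    (x, y) ∈ convexHull ℝ {((0 : ℝ), (0 : ℝ)), (a, 0), (b, s), (0, s)} := by
  set t := y / s
  have ht : t ∈ Set.Icc (0 : ℝ) 1 := ⟨by positivity, div_le_one_of_le₀ hys hs.le⟩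
  set X := a + (b - a) * t
  have hxX : x ≤ X := by
    have : s * X = a * s - (a - b) * y := by simp only [X, t]; field_simp; ring
    nlinarith
  have hleft : (0, y) ∈ segment ℝ ((0 : ℝ), (0 : ℝ)) (0, s) := by
    rw [← Prod.image_mk_segment_right, segment_eq_Icc hs.le]
    exact ⟨y, ⟨hy, hys⟩, rfl⟩
  have hright : (X, y) ∈ segment ℝ (a, (0 : ℝ)) (b, s) := by
    convert lineMap_mem_segment ℝ (a, (0 : ℝ)) (b, s) ht using 1
    simp only [AffineMap.lineMap_apply_module, Prod.smul_mk, smul_eq_mul, mul_zero,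
      Prod.mk_add_mk, zero_add, Prod.mk.injEq, X, t]
    constructor <;> [ring; field_simp]
  have hmid : (x, y) ∈ segment ℝ (0, y) (X, y) := by
    rw [← Prod.image_mk_segment_left, segment_eq_Icc (hx.trans hxX)]
    exact ⟨x, ⟨hx, hxX⟩, rfl⟩
  exact (convex_convexHull ℝ _).segment_subset
    (segment_subset_convexHull (by simp) (by simp) hleft)
    (segment_subset_convexHull (by simp) (by simp) hright) hmid

theorem mem_latticePts_iff {a b s : ℕ} (hs : 0 < s) {u : ℕ × ℕ} :
    u ∈ latticePts a b s ↔ u.2 ≤ s ∧ s * u.1 + a * u.2 ≤ a * s + b * u.2 := by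
  have hs' : (0 : ℝ) < s := by exact_mod_cast hs
  have hslope : s * u.1 + a * u.2 ≤ a * s + b * u.2 ↔
      (s * u.1 + (a - b) * u.2 : ℝ) ≤ a * s := by
    rw [← Nat.cast_le (α := ℝ)]
    push_cast
    constructor <;> intro h <;> linarith
  rw [hslope, ← Nat.cast_le (α := ℝ)]
  constructor
  · exact fun hu ↦ convexHull_trapezoid_subset (Nat.cast_nonneg a) (Nat.cast_nonneg b) hs' hu
  · rintro ⟨hys, h⟩
    exact mem_convexHull_trapezoid hs' (Nat.cast_nonneg _) (Nat.cast_nonneg _) hys h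

section latticePts

variable {a b s : ℕ}

theorem fst_le_of_mem_latticePts (hs : 0 < s) (hba : b ≤ a) {u : ℕ × ℕ}
    (hu : u ∈ latticePts a b s) : u.1 ≤ a := by
  rw [mem_latticePts_iff hs] at hu
  have : s * u.1 ≤ s * a := by nlinarith
  exact Nat.le_of_mul_le_mul_left this hs

theorem mem_latticePts_two_mul_of_add (hs : 0 < s) (hba : b ≤ a) {u v : ℕ × ℕ}
    (hu : u ∈ latticePts a b s) (hv : v ∈ latticePts a b s) {y : ℕ} (hys : y ≤ s)
    (hy : y ≤ u.2 + v.2) : (u.1 + v.1, y) ∈ latticePts (2 * a) (a + b) s := by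
  rw [mem_latticePts_iff hs] at hu hv ⊢
  refine ⟨hys, ?_⟩
  nlinarith

theorem exists_add_eq_of_mem_latticePts_two_mul (hs : 0 < s) {x y : ℕ}
    (hxy : (x, y) ∈ latticePts (2 * a) (a + b) s) :
    ∃ u ∈ latticePts a b s, ∃ v ∈ latticePts a b s, u + v = (x, y) := by
  rw [mem_latticePts_iff hs] at hxy
  obtain ⟨hys, hxy⟩ := hxy
  refine ⟨(min x a, 0), ?_, (x - min x a, y), ?_, by ext <;> simp⟩ <;>
    rw [mem_latticePts_iff hs]
  · exact ⟨Nat.zero_le _, by nlinarith [min_le_right x a]⟩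
  · refine ⟨hys, ?_⟩
    rcases le_total x a with hxa | hax
    · rw [min_eq_left hxa, Nat.sub_self]
      nlinarith
    · obtain ⟨c, rfl⟩ := Nat.exists_eq_add_of_le hax
      rw [min_eq_right hax, Nat.add_sub_cancel_left]
      nlinarith

end latticePts

theorem minkowski_sum_reduction_general (q a b : ℕ) (hq : 3 ≤ q)
    (hba : b ≤ a) (h2a : 2 * a ≤ q - 2) :
    (fun p : ℕ × ℕ => (p.1 % (q - 1), p.2 % (q - 1))) ''
        (Set.image2 (· + ·) (latticePts a b (q - 2)) (latticePts a b (q - 2))) =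
      latticePts (2 * a) (a + b) (q - 2) := by
  have hs : 0 < q - 2 := by omega
  have hq1 : q - 1 = q - 2 + 1 := by omega
  ext ⟨x, y⟩
  simp only [Set.mem_image, Set.mem_image2, Prod.mk.injEq, hq1]
  constructor
  · rintro ⟨_, ⟨u, hu, v, hv, rfl⟩, rfl, rfl⟩
    have hx : u.1 + v.1 < q - 2 + 1 := by
      have := fst_le_of_mem_latticePts hs hba hu
      have := fst_le_of_mem_latticePts hs hba hv
      omega
    rw [Prod.fst_add, Prod.snd_add, Nat.mod_eq_of_lt hx]
    exact mem_latticePts_two_mul_of_add hs hba hu hv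
      (Nat.le_of_lt_succ (Nat.mod_lt _ (Nat.succ_pos _))) (Nat.mod_le _ _)
  · intro hxy
    obtain ⟨u, hu, v, hv, huv⟩ := exists_add_eq_of_mem_latticePts_two_mul hs hxy
    have hx := fst_le_of_mem_latticePts hs (by omega : a + b ≤ 2 * a) hxy
    have hy := ((mem_latticePts_iff hs).1 hxy).1
    exact ⟨(x, y), ⟨u, hu, v, hv, huv⟩, Nat.mod_eq_of_lt (by omega),
      Nat.mod_eq_of_lt (by omega)⟩

/-- For `0 ≤ b ≤ a ≤ q−2` with `2a ≤ q−2`, the coordinatewise reduction modulo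
`q−1` of the Minkowski sum `U + U` of the lattice points `U` of the polytope with
vertices `(0,0),(a,0),(b,q−2),(0,q−2)` is exactly the set of lattice points of the
polytope with vertices `(0,0),(2a,0),(a+b,q−2),(0,q−2)`. -/
theorem minkowski_sum_reduction (q a b : ℕ) (hq : 3 ≤ q)
    (hba : b ≤ a) (haq : a ≤ q - 2) (h2a : 2 * a ≤ q - 2) :
    (fun p : ℕ × ℕ => (p.1 % (q - 1), p.2 % (q - 1))) ''
        (Set.image2 (· + ·) (latticePts a b (q - 2)) (latticePts a b (q - 2))) =
      latticePts (2 * a) (a + b) (q - 2) :=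
  minkowski_sum_reduction_general q a b hq hba h2a
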